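/- Let T be a contraction on a complex Hilbert space H and let U be a unitary operator on H ⊕ E (E a complex Hilbert space) whose compression to H equals T. Then the map D_T x ↦ P_E(U(x ⊕ 0)) extends to a linear isometry from the defect space 𝒟_T into E, and similarly there is a linear isometry from 𝒟_{T*} into E; consequently dim 𝒟_T ≤ dim E and dim 𝒟_{T*} ≤ dim E. -/

import Mathlib

open scoped InnerProductSpace
open Filter Topology

/-- The numerical range of a bounded operator: `W(T) = {⟨Tx, x⟩ : ‖x‖ = 1}`
(written with Mathlib's inner product, which is linear in the second variable). -/
def numericalRange {H : Type*} [NormedAddCommGroup H] [InnerProductSpace ℂ H]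
    (T : H →L[ℂ] H) : Set ℂ :=
  {z | ∃ x : H, ‖x‖ = 1 ∧ (inner ℂ x (T x) : ℂ) = z}

/-- The defect operator `D_T = (I - T*T)^{1/2}` of a contraction. -/
noncomputable def defectOp {H : Type*} [NormedAddCommGroup H] [InnerProductSpace ℂ H]
    [CompleteSpace H] (T : H →L[ℂ] H) : H →L[ℂ] H :=
  CFC.sqrt (1 - ContinuousLinearMap.adjoint T * T)

/-- The defect space `𝒟_T = closure (range D_T)`. -/
noncomputable def defectSpace {H : Type*} [NormedAddCommGroup H] [InnerProductSpace ℂ H]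
    [CompleteSpace H] (T : H →L[ℂ] H) : Submodule ℂ H :=
  (LinearMap.range (defectOp T : H →ₗ[ℂ] H)).topologicalClosure

/-- `U` is a unitary dilation of `T` on the orthogonal direct sum `H ⊕ E`
(realized as `WithLp 2 (H × E)`): `U` is unitary and the compression of `U` to `H` is `T`. -/
def IsUnitaryDilation {H E : Type*} [NormedAddCommGroup H] [InnerProductSpace ℂ H]
    [CompleteSpace H] [NormedAddCommGroup E] [InnerProductSpace ℂ E] [CompleteSpace E]
    (T : H →L[ℂ] H) (U : WithLp 2 (H × E) →L[ℂ] WithLp 2 (H × E)) : Prop :=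
  U ∈ unitary (WithLp 2 (H × E) →L[ℂ] WithLp 2 (H × E)) ∧
    ∀ x : H, T x = (WithLp.equiv 2 (H × E) (U ((WithLp.equiv 2 (H × E)).symm (x, 0)))).1

/-!
For a unitary dilation `U` of `T` on `H ⊕ E`, write `C x = P_E U (x ⊕ 0)`. Since `U` is isometric,
`‖x‖² = ‖T x‖² + ‖C x‖²`, so `T` is a contraction and `‖C x‖² = ‖x‖² - ‖T x‖² = ‖D_T x‖²`.
Hence `D_T x ↦ C x` is a well-defined isometry on the range of `D_T`, which extends by continuity to
its closure `𝒟_T`. The same applies to `T*`, whose compression is that of the unitary `U*`.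
-/

namespace LinearMap

variable {𝕜 E F G : Type*} [NontriviallyNormedField 𝕜] [AddCommGroup E] [Module 𝕜 E]
  [SeminormedAddCommGroup F] [NormedSpace 𝕜 F] [NormedAddCommGroup G] [NormedSpace 𝕜 G]
  [CompleteSpace G]

theorem exists_linearIsometry_comp_eq_of_norm_eq {f : E →ₗ[𝕜] G} {e : E →ₗ[𝕜] F}
    (he : DenseRange e) (hfe : ∀ x, ‖f x‖ = ‖e x‖) :
    ∃ g : F →ₗᵢ[𝕜] G, ∀ x, g (e x) = f x := by
  have hbound : ∃ C, ∀ x, ‖f x‖ ≤ C * ‖e x‖ := ⟨1, fun x => by rw [hfe, one_mul]⟩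
  refine ⟨⟨(f.extendOfNorm e).toLinearMap, fun y => ?_⟩, extendOfNorm_eq he hbound⟩
  refine he.induction ?_ (isClosed_eq (by fun_prop) (by fun_prop)) y
  rintro _ ⟨x, rfl⟩
  simp [extendOfNorm_eq he hbound, hfe]

theorem exists_linearIsometry_closure_range_of_norm_eq (f : E →ₗ[𝕜] G) (A : E →ₗ[𝕜] F) (hfA : ∀ x, ‖f x‖ = ‖A x‖) :
    ∃ g : (range A).topologicalClosure →ₗᵢ[𝕜] G, ∀ x,
      g ⟨A x, Submodule.le_topologicalClosure _ (mem_range_self A x)⟩ = f x := by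
  let e := A.codRestrict _ fun x => Submodule.le_topologicalClosure _ (mem_range_self A x)
  have he : DenseRange e := by
    refine ((denseRange_inclusion_iff subset_closure).2 subset_rfl).mono ?_
    rintro _ ⟨⟨_, x, rfl⟩, rfl⟩
    exact ⟨x, rfl⟩
  exact exists_linearIsometry_comp_eq_of_norm_eq he hfA

end LinearMap

section

open ContinuousLinearMap

variable {H : Type*} [NormedAddCommGroup H] [InnerProductSpace ℂ H] [CompleteSpace H]

theorem one_sub_adjoint_mul_self_nonneg {T : H →L[ℂ] H} (hT : ‖T‖ ≤ 1) :
    0 ≤ 1 - adjoint T * T := by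
  rw [sub_nonneg, ← star_eq_adjoint,
    ← CStarAlgebra.norm_le_one_iff_of_nonneg _ (star_mul_self_nonneg T),
    CStarRing.norm_star_mul_self]
  exact mul_le_one₀ hT (norm_nonneg T) hT

theorem norm_defectOp_apply_sq {T : H →L[ℂ] H} (hT : ‖T‖ ≤ 1) (x : H) :
    ‖defectOp T x‖ ^ 2 = ‖x‖ ^ 2 - ‖T x‖ ^ 2 := by
  have hD : adjoint (defectOp T) * defectOp T = 1 - adjoint T * T := by
    rw [← star_eq_adjoint, (CFC.sqrt_nonneg _).isSelfAdjoint.star_eq]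
    exact CFC.sqrt_mul_sqrt_self _ (one_sub_adjoint_mul_self_nonneg hT)
  rw [apply_norm_sq_eq_inner_adjoint_left, ← mul_def, hD, apply_norm_sq_eq_inner_adjoint_left,
    ← inner_self_eq_norm_sq (𝕜 := ℂ)]
  simp [inner_sub_left]

end

section

open ContinuousLinearMap

variable {𝕜 H E : Type*} [NormedField 𝕜] [SeminormedAddCommGroup H] [NormedSpace 𝕜 H]
  [SeminormedAddCommGroup E] [NormedSpace 𝕜 E]

noncomputable def lowerLeftBlock (U : WithLp 2 (H × E) →L[𝕜] WithLp 2 (H × E)) : H →L[𝕜] E :=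
  snd 𝕜 H E ∘L (WithLp.prodContinuousLinearEquiv 2 𝕜 H E : WithLp 2 (H × E) →L[𝕜] H × E) ∘L U ∘L
    ((WithLp.prodContinuousLinearEquiv 2 𝕜 H E).symm : H × E →L[𝕜] WithLp 2 (H × E)) ∘L inl 𝕜 H E

theorem lowerLeftBlock_apply (U : WithLp 2 (H × E) →L[𝕜] WithLp 2 (H × E)) (x : H) :
    lowerLeftBlock U x = (WithLp.equiv 2 (H × E) (U ((WithLp.equiv 2 (H × E)).symm (x, 0)))).2 :=
  rfl

end

namespace IsUnitaryDilation

open ContinuousLinearMap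

variable {H E : Type*} [NormedAddCommGroup H] [InnerProductSpace ℂ H] [CompleteSpace H]
  [NormedAddCommGroup E] [InnerProductSpace ℂ E] [CompleteSpace E]
  {T : H →L[ℂ] H} {U : WithLp 2 (H × E) →L[ℂ] WithLp 2 (H × E)}

theorem norm_sq_add_norm_lowerLeftBlock_sq (hU : IsUnitaryDilation T U) (x : H) :
    ‖T x‖ ^ 2 + ‖lowerLeftBlock U x‖ ^ 2 = ‖x‖ ^ 2 := by
  have hx := norm_map_of_mem_unitary hU.1 ((WithLp.equiv 2 (H × E)).symm (x, 0))
  rw [← sq_eq_sq₀ (norm_nonneg _) (norm_nonneg _), WithLp.prod_norm_sq_eq_of_L2,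
    WithLp.prod_norm_sq_eq_of_L2] at hx
  simpa [hU.2 x, lowerLeftBlock_apply] using hx

theorem norm_le_one (hU : IsUnitaryDilation T U) : ‖T‖ ≤ 1 := by
  refine T.opNorm_le_bound zero_le_one fun x => ?_
  rw [one_mul, ← sq_le_sq₀ (norm_nonneg _) (norm_nonneg _),
    ← hU.norm_sq_add_norm_lowerLeftBlock_sq x]
  exact le_add_of_nonneg_right (sq_nonneg _)

theorem norm_lowerLeftBlock_apply (hU : IsUnitaryDilation T U) (x : H) :
    ‖lowerLeftBlock U x‖ = ‖defectOp T x‖ := by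
  rw [← sq_eq_sq₀ (norm_nonneg _) (norm_nonneg _), norm_defectOp_apply_sq hU.norm_le_one,
    ← hU.norm_sq_add_norm_lowerLeftBlock_sq x]
  ring

theorem adjoint (hU : IsUnitaryDilation T U) :
    IsUnitaryDilation (ContinuousLinearMap.adjoint T) (star U) := by
  refine ⟨Unitary.star_mem hU.1, fun x => ext_inner_right ℂ fun y => ?_⟩
  let ι : H → WithLp 2 (H × E) := fun z => (WithLp.equiv 2 (H × E)).symm (z, 0)
  calc ⟪ContinuousLinearMap.adjoint T x, y⟫_ℂ = ⟪x, T y⟫_ℂ := adjoint_inner_left T y x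
    _ = ⟪ι x, U (ι y)⟫_ℂ := by simp [ι, WithLp.prod_inner_apply, hU.2 y]
    _ = ⟪star U (ι x), ι y⟫_ℂ := by rw [star_eq_adjoint, adjoint_inner_left]
    _ = _ := by simp [ι, WithLp.prod_inner_apply]

theorem exists_linearIsometry_defectSpace (hU : IsUnitaryDilation T U) :
    ∃ f : defectSpace T →ₗᵢ[ℂ] E, ∀ x : H,
      f ⟨defectOp T x, Submodule.le_topologicalClosure _ (LinearMap.mem_range_self _ x)⟩ =
        lowerLeftBlock U x :=
  LinearMap.exists_linearIsometry_closure_range_of_norm_eq (lowerLeftBlock U : H →ₗ[ℂ] E)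
    (defectOp T : H →ₗ[ℂ] H) hU.norm_lowerLeftBlock_apply

end IsUnitaryDilation

universe u v

theorem defect_isometry_of_unitary_dilation_general
    {H : Type u} [NormedAddCommGroup H] [InnerProductSpace ℂ H] [CompleteSpace H]
    {E : Type v} [NormedAddCommGroup E] [InnerProductSpace ℂ E] [CompleteSpace E]
    (T : H →L[ℂ] H)
    (U : WithLp 2 (H × E) →L[ℂ] WithLp 2 (H × E)) (hU : IsUnitaryDilation T U) :
    (∃ f : defectSpace T →ₗᵢ[ℂ] E, ∀ x : H,
      f ⟨defectOp T x,
          Submodule.le_topologicalClosure _ (LinearMap.mem_range_self _ x)⟩ =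
        (WithLp.equiv 2 (H × E) (U ((WithLp.equiv 2 (H × E)).symm (x, 0)))).2) ∧
    (∃ g : defectSpace (ContinuousLinearMap.adjoint T) →ₗᵢ[ℂ] E, ∀ x : H,
      g ⟨defectOp (ContinuousLinearMap.adjoint T) x,
          Submodule.le_topologicalClosure _ (LinearMap.mem_range_self _ x)⟩ =
        (WithLp.equiv 2 (H × E) ((star U) ((WithLp.equiv 2 (H × E)).symm (x, 0)))).2) ∧
    Cardinal.lift.{v} (Module.rank ℂ (defectSpace T)) ≤
      Cardinal.lift.{u} (Module.rank ℂ E) ∧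
    Cardinal.lift.{v} (Module.rank ℂ (defectSpace (ContinuousLinearMap.adjoint T))) ≤
      Cardinal.lift.{u} (Module.rank ℂ E) := by
  obtain ⟨f, hf⟩ := hU.exists_linearIsometry_defectSpace
  obtain ⟨g, hg⟩ := hU.adjoint.exists_linearIsometry_defectSpace
  exact ⟨⟨f, hf⟩, ⟨g, hg⟩, f.toLinearMap.lift_rank_le_of_injective f.injective,
    g.toLinearMap.lift_rank_le_of_injective g.injective⟩

/-- If `U` is a unitary dilation of a contraction `T` on `H ⊕ E`, then
`D_T x ↦ P_E (U (x ⊕ 0))` extends to a linear isometry `𝒟_T → E`, and similarly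
`D_{T*} x ↦ P_E (U* (x ⊕ 0))` extends to a linear isometry `𝒟_{T*} → E`; consequently
`dim 𝒟_T ≤ dim E` and `dim 𝒟_{T*} ≤ dim E`. -/
theorem defect_isometry_of_unitary_dilation
    {H : Type u} [NormedAddCommGroup H] [InnerProductSpace ℂ H] [CompleteSpace H]
    {E : Type v} [NormedAddCommGroup E] [InnerProductSpace ℂ E] [CompleteSpace E]
    (T : H →L[ℂ] H) (hT : ‖T‖ ≤ 1)
    (U : WithLp 2 (H × E) →L[ℂ] WithLp 2 (H × E)) (hU : IsUnitaryDilation T U) :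
    (∃ f : defectSpace T →ₗᵢ[ℂ] E, ∀ x : H,
      f ⟨defectOp T x,
          Submodule.le_topologicalClosure _ (LinearMap.mem_range_self _ x)⟩ =
        (WithLp.equiv 2 (H × E) (U ((WithLp.equiv 2 (H × E)).symm (x, 0)))).2) ∧
    (∃ g : defectSpace (ContinuousLinearMap.adjoint T) →ₗᵢ[ℂ] E, ∀ x : H,
      g ⟨defectOp (ContinuousLinearMap.adjoint T) x,
          Submodule.le_topologicalClosure _ (LinearMap.mem_range_self _ x)⟩ =
        (WithLp.equiv 2 (H × E) ((star U) ((WithLp.equiv 2 (H × E)).symm (x, 0)))).2) ∧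
    Cardinal.lift.{v} (Module.rank ℂ (defectSpace T)) ≤
      Cardinal.lift.{u} (Module.rank ℂ E) ∧
    Cardinal.lift.{v} (Module.rank ℂ (defectSpace (ContinuousLinearMap.adjoint T))) ≤
      Cardinal.lift.{u} (Module.rank ℂ E) :=
  defect_isometry_of_unitary_dilation_general T U hU
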